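/- arXiv:2006.10858 — 4 statements merged into one kernel-verified Lean document; each statement's English description precedes it below -/
import Mathlib

section
/- Let γ : [-ℓ/2, ℓ/2] → ℝ^q be a C² curve parametrized by arc length (‖γ'(t)‖ = 1 for all t) with ‖γ''(t)‖ ≤ 1/r₀ for all t, where r₀ > 0. If ℓ ≤ π r₀, then ‖γ(ℓ/2) - γ(-ℓ/2)‖ ≥ 2 r₀ sin(ℓ/(2 r₀)). -/
open Real Set Filter Topology MeasureTheory
open scoped RealInnerProductSpace

/-! Write `T = γ'` and `ψ t = ⟪T t, T 0⟫`. As `T` has unit length, `T'` is orthogonal to `T`, hence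
`ψ' ≥ -‖T'‖ √(1 - ψ²) ≥ -√(1 - ψ²) / r₀`, and comparison with the extremal solution `cos (t / r₀)`
gives `ψ t ≥ cos (t / r₀)` as long as `|t| / r₀ < π`. Projecting the chord on the unit vector `T 0`,
`‖γ (ℓ/2) - γ (-ℓ/2)‖ ≥ ∫ ψ ≥ ∫ cos (t / r₀) = 2 r₀ sin (ℓ / (2 r₀))`. -/

/- `√(1 - ψ²)` is not Lipschitz at `ψ = 1`, so `ψ` is first compared with the strictly faster
barrier `cos (k t + ε)`, which it cannot touch from above; then `k → c` and `ε → 0`. -/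
theorem cos_add_le_of_neg_mul_sqrt_le_deriv {ψ ψ' : ℝ → ℝ} {c k ε L : ℝ} (hc : 0 ≤ c)
    (hck : c < k) (hε : 0 < ε) (hkL : k * L + ε < π) (hψ : ContinuousOn ψ (Icc 0 L))
    (hψ' : ∀ x ∈ Ico 0 L, HasDerivWithinAt ψ (ψ' x) (Ici x) x) (h0 : 1 ≤ ψ 0)
    (hbound : ∀ x ∈ Ico 0 L, -(c * √(1 - ψ x ^ 2)) ≤ ψ' x) :
    ∀ t ∈ Icc 0 L, cos (k * t + ε) ≤ ψ t := by
  have hderiv (x : ℝ) : HasDerivAt (fun t => cos (k * t + ε)) (-sin (k * x + ε) * k) x := by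
    simpa using (((hasDerivAt_id x).const_mul k).add_const ε).cos
  refine image_le_of_deriv_right_lt_deriv_boundary' (by fun_prop)
    (fun x _ => (hderiv x).hasDerivWithinAt) (by simpa using (cos_le_one ε).trans h0) hψ hψ' ?_
  intro x hx hcontact
  set θ := k * x + ε
  have hθ_pos : 0 < θ := by nlinarith [hx.1]
  have hθ_lt : θ < π := by nlinarith [hx.2]
  have hsin : 0 < sin θ := sin_pos_of_pos_of_lt_pi hθ_pos hθ_lt
  have hsqrt : √(1 - ψ x ^ 2) = sin θ := by
    rw [← hcontact, sin_eq_sqrt_one_sub_cos_sq hθ_pos.le hθ_lt.le]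
  have hψ'x := hbound x hx
  rw [hsqrt] at hψ'x
  nlinarith

theorem cos_mul_le_of_neg_mul_sqrt_le_deriv {ψ ψ' : ℝ → ℝ} {c L : ℝ} (hc : 0 ≤ c)
    (hcL : c * L < π) (hψ : ContinuousOn ψ (Icc 0 L))
    (hψ' : ∀ x ∈ Ico 0 L, HasDerivWithinAt ψ (ψ' x) (Ici x) x) (h0 : 1 ≤ ψ 0)
    (hbound : ∀ x ∈ Ico 0 L, -(c * √(1 - ψ x ^ 2)) ≤ ψ' x) :
    ∀ t ∈ Icc 0 L, cos (c * t) ≤ ψ t := by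
  intro t ht
  have hlim : Tendsto (fun ε => cos ((c + ε) * t + ε)) (𝓝[>] 0) (𝓝 (cos (c * t))) := by
    have : Continuous fun ε => cos ((c + ε) * t + ε) := by fun_prop
    simpa using (this.tendsto 0).mono_left nhdsWithin_le_nhds
  have hsmall : ∀ᶠ ε in 𝓝[>] 0, (c + ε) * L + ε < π := by
    have : Continuous fun ε => (c + ε) * L + ε := by fun_prop
    exact nhdsWithin_le_nhds ((this.tendsto 0).eventually (gt_mem_nhds (by simpa using hcL)))
  refine le_of_tendsto hlim ?_
  filter_upwards [hsmall, self_mem_nhdsWithin] with ε hεL hε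
  exact cos_add_le_of_neg_mul_sqrt_le_deriv hc (lt_add_of_pos_right c hε) hε hεL hψ hψ' h0 hbound
    t ht

section InnerProductSpace

variable {E : Type*} [NormedAddCommGroup E] [InnerProductSpace ℝ E]

theorem inner_eq_zero_of_hasDerivWithinAt_of_norm_eq {f : ℝ → E} {f' : E} {s : Set ℝ}
    {x r : ℝ} (hf : HasDerivWithinAt f f' s x) (hs : UniqueDiffWithinAt ℝ s x) (hx : x ∈ s)
    (hr : ∀ y ∈ s, ‖f y‖ = r) : ⟪f x, f'⟫ = 0 := by
  have hconst : HasDerivWithinAt (‖f ·‖ ^ 2) 0 s x :=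
    (hasDerivWithinAt_const x s (r ^ 2)).congr (fun y hy => by rw [hr y hy]) (by rw [hr x hx])
  have := hs.eq_deriv s hf.norm_sq hconst
  linarith

theorem abs_real_inner_le_norm_mul_sqrt_of_inner_eq_zero {a u v : E} (hu : ‖u‖ = 1)
    (hau : ⟪a, u⟫ = 0) : |⟪a, v⟫| ≤ ‖a‖ * √(‖v‖ ^ 2 - ⟪u, v⟫ ^ 2) := by
  have hw : ‖v - ⟪u, v⟫ • u‖ ^ 2 = ‖v‖ ^ 2 - ⟪u, v⟫ ^ 2 := by
    have huu : ⟪u, u⟫ = 1 := by rw [real_inner_self_eq_norm_sq, hu, one_pow]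
    rw [← real_inner_self_eq_norm_sq, ← real_inner_self_eq_norm_sq]
    simp only [inner_sub_left, inner_sub_right, real_inner_smul_left, real_inner_smul_right,
      real_inner_comm u v, huu]
    ring
  calc |⟪a, v⟫| = |⟪a, v - ⟪u, v⟫ • u⟫| := by
        rw [inner_sub_right, real_inner_smul_right, hau, mul_zero, sub_zero]
    _ ≤ ‖a‖ * ‖v - ⟪u, v⟫ • u‖ := abs_real_inner_le_norm _ _
    _ = ‖a‖ * √(‖v‖ ^ 2 - ⟪u, v⟫ ^ 2) := by rw [← hw, sqrt_sq (norm_nonneg _)]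

theorem cos_mul_le_inner_of_norm_deriv_le {T T' : ℝ → E} {c L : ℝ} (hc : 0 ≤ c)
    (hcL : c * L < π) (hT : ∀ t ∈ Icc 0 L, HasDerivAt T (T' t) t)
    (hunit : ∀ t ∈ Icc 0 L, ‖T t‖ = 1) (hcurv : ∀ t ∈ Icc 0 L, ‖T' t‖ ≤ c) :
    ∀ t ∈ Icc 0 L, cos (c * t) ≤ ⟪T t, T 0⟫ := by
  intro t ht
  have h0 : (0 : ℝ) ∈ Icc 0 L := ⟨le_rfl, ht.1.trans ht.2⟩
  refine cos_mul_le_of_neg_mul_sqrt_le_deriv (ψ' := fun x => ⟪T' x, T 0⟫) hc hcL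
    (fun x hx => ((hT x hx).continuousAt.inner continuousAt_const).continuousWithinAt)
    (fun x hx => by simpa using
      (hT x (Ico_subset_Icc_self hx)).hasDerivWithinAt.inner ℝ (hasDerivWithinAt_const x _ (T 0)))
    (by rw [real_inner_self_eq_norm_sq, hunit 0 h0, one_pow]) ?_ t ht
  intro x hx
  have hxL : x ∈ Icc 0 L := Ico_subset_Icc_self hx
  have horth : ⟪T' x, T x⟫ = 0 := by
    rw [real_inner_comm]
    exact inner_eq_zero_of_hasDerivWithinAt_of_norm_eq (hT x hxL).hasDerivWithinAt
      (uniqueDiffOn_Icc (hx.1.trans_lt hx.2) x hxL) hxL hunit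
  have hproj := abs_real_inner_le_norm_mul_sqrt_of_inner_eq_zero (v := T 0) (hunit x hxL) horth
  rw [hunit 0 h0, one_pow] at hproj
  have := mul_le_mul_of_nonneg_right (hcurv x hxL) (sqrt_nonneg (1 - ⟪T x, T 0⟫ ^ 2))
  linarith [neg_abs_le ⟪T' x, T 0⟫]

theorem cos_mul_le_inner_of_norm_deriv_le_symm {T T' : ℝ → E} {c L : ℝ}
    (hc : 0 ≤ c) (hcL : c * L < π) (hT : ∀ t ∈ Icc (-L) L, HasDerivAt T (T' t) t)
    (hunit : ∀ t ∈ Icc (-L) L, ‖T t‖ = 1) (hcurv : ∀ t ∈ Icc (-L) L, ‖T' t‖ ≤ c) :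
    ∀ t ∈ Icc (-L) L, cos (c * t) ≤ ⟪T t, T 0⟫ := by
  intro t ht
  have hpos : ∀ s ∈ Icc 0 L, s ∈ Icc (-L) L := fun s hs => ⟨by linarith [hs.1, hs.2], hs.2⟩
  have hneg : ∀ s ∈ Icc 0 L, -s ∈ Icc (-L) L :=
    fun s hs => ⟨by linarith [hs.2], by linarith [hs.1, hs.2]⟩
  rcases le_total 0 t with h | h
  · exact cos_mul_le_inner_of_norm_deriv_le hc hcL (fun s hs => hT s (hpos s hs))
      (fun s hs => hunit s (hpos s hs)) (fun s hs => hcurv s (hpos s hs)) t ⟨h, ht.2⟩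
  · have hrev := cos_mul_le_inner_of_norm_deriv_le (T := fun s => -T (-s))
      (T' := fun s => T' (-s)) hc hcL
      (fun s hs => by
        simpa [Function.comp_def] using ((hT (-s) (hneg s hs)).scomp s (hasDerivAt_neg s)).fun_neg)
      (fun s hs => by simpa using hunit (-s) (hneg s hs))
      (fun s hs => by simpa using hcurv (-s) (hneg s hs)) (-t) ⟨by linarith, by linarith [ht.1]⟩
    simpa using hrev

theorem integral_le_norm_sub_of_le_inner {γ γ' : ℝ → E} {g : ℝ → ℝ} {a b : ℝ} {v : E}
    (hab : a ≤ b) (hγ : ∀ t ∈ Icc a b, HasDerivAt γ (γ' t) t) (hv : ‖v‖ ≤ 1)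
    (hg : IntegrableOn g (Icc a b)) (hle : ∀ t ∈ Icc a b, g t ≤ ⟪γ' t, v⟫) :
    ∫ t in a..b, g t ≤ ‖γ b - γ a‖ :=
  calc ∫ t in a..b, g t ≤ ⟪γ b, v⟫ - ⟪γ a, v⟫ :=
        intervalIntegral.integral_le_sub_of_hasDeriv_right_of_le hab
          (fun t ht => ((hγ t ht).continuousAt.inner continuousAt_const).continuousWithinAt)
          (fun t ht => by simpa using
            (hγ t (Ioo_subset_Icc_self ht)).hasDerivWithinAt.inner ℝ (hasDerivWithinAt_const t _ v))
          hg (fun t ht => hle t (Ioo_subset_Icc_self ht))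
    _ = ⟪γ b - γ a, v⟫ := (inner_sub_left _ _ _).symm
    _ ≤ ‖γ b - γ a‖ * ‖v‖ := real_inner_le_norm _ _
    _ ≤ ‖γ b - γ a‖ := mul_le_of_le_one_right (norm_nonneg _) hv

end InnerProductSpace

theorem integral_cos_div_symm {L r : ℝ} (hr : r ≠ 0) :
    ∫ t in -L..L, cos (t / r) = 2 * r * sin (L / r) := by
  rw [intervalIntegral.integral_comp_div cos hr, integral_cos, neg_div, sin_neg, smul_eq_mul]
  ring

theorem stmt0 {q : ℕ} (r₀ ℓ : ℝ) (hr₀ : 0 < r₀) (hℓ : 0 < ℓ)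
    (γ γ' γ'' : ℝ → EuclideanSpace ℝ (Fin q))
    (hd1 : ∀ t ∈ Icc (-(ℓ / 2)) (ℓ / 2), HasDerivAt γ (γ' t) t)
    (hd2 : ∀ t ∈ Icc (-(ℓ / 2)) (ℓ / 2), HasDerivAt γ' (γ'' t) t)
    (hunit : ∀ t ∈ Icc (-(ℓ / 2)) (ℓ / 2), ‖γ' t‖ = 1)
    (hcurv : ∀ t ∈ Icc (-(ℓ / 2)) (ℓ / 2), ‖γ'' t‖ ≤ 1 / r₀)
    (hlen : ℓ ≤ π * r₀) :
    ‖γ (ℓ / 2) - γ (-(ℓ / 2))‖ ≥ 2 * r₀ * Real.sin (ℓ / (2 * r₀)) := by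
  have hcL : 1 / r₀ * (ℓ / 2) < π := by
    rw [one_div_mul_eq_div, div_lt_iff₀ hr₀]
    linarith [mul_pos pi_pos hr₀]
  have hcos := cos_mul_le_inner_of_norm_deriv_le_symm (one_div_nonneg.2 hr₀.le) hcL
    hd2 hunit hcurv
  have hchord := integral_le_norm_sub_of_le_inner (g := fun t => cos (t / r₀)) (by linarith) hd1
    (hunit 0 ⟨by linarith, by linarith⟩).le
    (by fun_prop : Continuous fun t => cos (t / r₀)).integrableOn_Icc
    (fun t ht => by simpa only [one_div_mul_eq_div] using hcos t ht)
  rwa [integral_cos_div_symm hr₀.ne', div_div] at hchord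
end

section
/- Let B be an n × n real symmetric matrix with spectral decomposition B = Σᵢ λᵢ uᵢ uᵢᵀ, λ₁ ≥ ... ≥ λₙ. Define B̄ = Σ_{i=1}^{d} max(λᵢ, 0) uᵢ uᵢᵀ. Then for every symmetric positive semidefinite matrix C of rank at most d, ‖B̄ - B‖_F ≤ ‖C - B‖_F. -/
/-!
Write `B = Uᵀ diag(λ) U` and `C = Wᵀ diag(c) W` with `U`, `W` orthogonal, `c ≥ 0` and at most `d`
of the `c j` nonzero. Then `‖B̄ - B‖² = ∑ λᵢ² - ∑_{i < d} (λᵢ⁺)²`, while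
`‖C - B‖² = ∑ c_j² - 2 ∑ c_j λᵢ S_ji + ∑ λᵢ²` with `S_ji = (W Uᵀ)_ji²` doubly stochastic, being the
squared entries of an orthogonal matrix. Since `2 c λ - c² ≤ (λ⁺)²` for `c ≥ 0`, it suffices that
`∑ᵢ pᵢ (λᵢ⁺)² ≤ ∑_{i < d} (λᵢ⁺)²` for the weights `pᵢ = ∑_{c_j ≠ 0} S_ji ∈ [0, 1]`, whose total is
at most `d`; this holds because `(λᵢ⁺)²` is antitone in `i`.
-/

open Matrix

/-- Frobenius norm of a real square matrix. -/
noncomputable def frobNorm {n : ℕ} (A : Matrix (Fin n) (Fin n) ℝ) : ℝ :=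
  Real.sqrt (∑ i, ∑ j, (A i j) ^ 2)

open Finset

section Conjugation

variable {m ι κ R : Type*} [Fintype ι] [DecidableEq ι] [CommRing R]

theorem Matrix.sum_smul_vecMulVec_self (v : ι → m → R) (α : ι → R) :
    ∑ i, α i • vecMulVec (v i) (v i) = (of v)ᵀ * diagonal α * of v := by
  ext a b
  rw [mul_apply]
  simp only [Matrix.sum_apply, Matrix.smul_apply, vecMulVec_apply, mul_diagonal, transpose_apply,
    of_apply, smul_eq_mul]
  exact Finset.sum_congr rfl fun i _ => by ring

theorem Matrix.isSymm_transpose_mul_diagonal_mul (v : Matrix ι m R) (α : ι → R) :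
    (vᵀ * diagonal α * v).IsSymm := by
  simp [IsSymm, transpose_mul, Matrix.mul_assoc]

variable [Fintype m] [Fintype κ] [DecidableEq κ]

theorem Matrix.trace_transpose_mul_diagonal_mul_mul (v : Matrix ι m R) (w : Matrix κ m R)
    (α : ι → R) (β : κ → R) :
    trace (vᵀ * diagonal α * v * (wᵀ * diagonal β * w)) =
      ∑ i, ∑ j, α i * β j * (v * wᵀ) i j ^ 2 := by
  have hcycle : trace (vᵀ * diagonal α * v * (wᵀ * diagonal β * w)) =
      trace (diagonal α * (v * wᵀ) * diagonal β * (v * wᵀ)ᵀ) := by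
    rw [transpose_mul, transpose_transpose]
    simp only [Matrix.mul_assoc]
    rw [trace_mul_comm vᵀ]
    simp only [Matrix.mul_assoc]
  rw [hcycle, ← sum_hadamard_eq]
  simp only [hadamard_apply, mul_diagonal, diagonal_mul]
  exact Finset.sum_congr rfl fun i _ => Finset.sum_congr rfl fun j _ => by ring

theorem Matrix.trace_transpose_mul_diagonal_mul_sq {v : Matrix ι m R} (hv : v * vᵀ = 1)
    (α : ι → R) :
    trace (vᵀ * diagonal α * v * (vᵀ * diagonal α * v)) = ∑ i, α i ^ 2 := by
  rw [trace_transpose_mul_diagonal_mul_mul, hv]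
  simp [one_apply, sq]

end Conjugation

theorem Matrix.IsHermitian.eq_mul_diagonal_mul_transpose {m : Type*} [Fintype m] [DecidableEq m]
    {A : Matrix m m ℝ} (hA : A.IsHermitian) :
    A = (hA.eigenvectorUnitary : Matrix m m ℝ) * diagonal hA.eigenvalues *
      (hA.eigenvectorUnitary : Matrix m m ℝ)ᵀ := by
  conv_lhs => rw [hA.spectral_theorem, Unitary.conjStarAlgAut_apply]
  simp [star_eq_conjTranspose]

theorem Matrix.PosSemidef.exists_eq_transpose_mul_diagonal_mul {m : Type*} [Fintype m]
    [DecidableEq m] {A : Matrix m m ℝ} (hA : A.PosSemidef) :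
    ∃ (w : Matrix m m ℝ) (c : m → ℝ), w * wᵀ = 1 ∧ (∀ j, 0 ≤ c j) ∧
      #{j | c j ≠ 0} = A.rank ∧ A = wᵀ * diagonal c * w := by
  refine ⟨(hA.1.eigenvectorUnitary : Matrix m m ℝ)ᵀ, hA.1.eigenvalues, ?_, hA.eigenvalues_nonneg,
    ?_, ?_⟩
  · simpa [star_eq_conjTranspose] using mem_unitaryGroup_iff'.mp hA.1.eigenvectorUnitary.2
  · rw [hA.1.rank_eq_card_non_zero_eigs, Fintype.card_subtype]
  · rw [transpose_transpose]
    exact hA.1.eq_mul_diagonal_mul_transpose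

theorem Matrix.sum_sq_apply_eq_one_of_mul_transpose_eq_one {ι κ : Type*} [Fintype ι]
    [DecidableEq κ] {Q : Matrix κ ι ℝ} (hQ : Q * Qᵀ = 1) (j : κ) : ∑ i, Q j i ^ 2 = 1 := by
  simpa [mul_apply, sq] using congrFun (congrFun hQ j) j

section Frobenius

variable {n : ℕ}

theorem frobNorm_nonneg (A : Matrix (Fin n) (Fin n) ℝ) : 0 ≤ frobNorm A :=
  Real.sqrt_nonneg _

theorem sq_frobNorm (A : Matrix (Fin n) (Fin n) ℝ) : frobNorm A ^ 2 = trace (A * Aᵀ) := by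
  rw [frobNorm, Real.sq_sqrt (by positivity), ← sum_hadamard_eq]
  simp [hadamard, sq]

theorem sq_frobNorm_of_isSymm {X : Matrix (Fin n) (Fin n) ℝ} (hX : X.IsSymm) :
    frobNorm X ^ 2 = trace (X * X) := by
  rw [sq_frobNorm, hX.eq]

theorem sq_frobNorm_sub_of_isSymm {X Y : Matrix (Fin n) (Fin n) ℝ} (hX : X.IsSymm)
    (hY : Y.IsSymm) :
    frobNorm (X - Y) ^ 2 = trace (X * X) - 2 * trace (X * Y) + trace (Y * Y) := by
  rw [sq_frobNorm_of_isSymm (hX.sub hY), sub_mul, mul_sub, mul_sub, trace_sub, trace_sub,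
    trace_sub, trace_mul_comm Y X]
  ring

theorem sq_frobNorm_transpose_mul_diagonal_mul {ι : Type*} [Fintype ι] [DecidableEq ι]
    {v : Matrix ι (Fin n) ℝ} (hv : v * vᵀ = 1) (α : ι → ℝ) :
    frobNorm (vᵀ * diagonal α * v) ^ 2 = ∑ i, α i ^ 2 := by
  rw [sq_frobNorm_of_isSymm (isSymm_transpose_mul_diagonal_mul _ _),
    trace_transpose_mul_diagonal_mul_sq hv]

theorem sq_frobNorm_transpose_mul_diagonal_mul_sub {ι κ : Type*} [Fintype ι] [DecidableEq ι]
    [Fintype κ] [DecidableEq κ] {v : Matrix ι (Fin n) ℝ} {w : Matrix κ (Fin n) ℝ}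
    (hv : v * vᵀ = 1) (hw : w * wᵀ = 1) (α : ι → ℝ) (β : κ → ℝ) :
    frobNorm (vᵀ * diagonal α * v - wᵀ * diagonal β * w) ^ 2 =
      ∑ i, α i ^ 2 - 2 * ∑ i, ∑ j, α i * β j * (v * wᵀ) i j ^ 2 + ∑ j, β j ^ 2 := by
  rw [sq_frobNorm_sub_of_isSymm (isSymm_transpose_mul_diagonal_mul _ _)
      (isSymm_transpose_mul_diagonal_mul _ _), trace_transpose_mul_diagonal_mul_sq hv,
    trace_transpose_mul_diagonal_mul_sq hw, trace_transpose_mul_diagonal_mul_mul]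

end Frobenius

theorem two_mul_mul_sub_sq_le_max_sq {c l : ℝ} (hc : 0 ≤ c) : 2 * c * l - c ^ 2 ≤ max l 0 ^ 2 := by
  rcases le_total 0 l with h | h
  · rw [max_eq_left h]; nlinarith [sq_nonneg (l - c)]
  · rw [max_eq_right h]; nlinarith [mul_nonneg hc (neg_nonneg.mpr h)]

theorem sq_max_zero_sub_self (l : ℝ) : (max l 0 - l) ^ 2 = l ^ 2 - max l 0 ^ 2 := by
  rcases le_total 0 l with h | h
  · rw [max_eq_left h]; ring
  · rw [max_eq_right h]; ring

theorem sum_mul_le_sum_ite_lt_of_antitone {n d : ℕ} {a p : Fin n → ℝ} (ha : Antitone a)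
    (ha0 : ∀ i, 0 ≤ a i) (hp0 : ∀ i, 0 ≤ p i) (hp1 : ∀ i, p i ≤ 1) (hp : ∑ i, p i ≤ d) :
    ∑ i, p i * a i ≤ ∑ i : Fin n, if (i : ℕ) < d then a i else 0 := by
  obtain ⟨t, ht0, hlt, hge⟩ : ∃ t, 0 ≤ t ∧ (∀ i : Fin n, (i : ℕ) < d → t ≤ a i) ∧
      ∀ i : Fin n, d ≤ (i : ℕ) → a i ≤ t := by
    by_cases hd : d < n
    · exact ⟨a ⟨d, hd⟩, ha0 _, fun i hi => ha (Fin.le_def.mpr hi.le),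
        fun i hi => ha (Fin.le_def.mpr hi)⟩
    · exact ⟨0, le_rfl, fun i _ => ha0 i, fun i hi => absurd i.2 (by omega)⟩
  have hcard : ∑ i, p i ≤ ∑ i : Fin n, if (i : ℕ) < d then (1 : ℝ) else 0 := by
    rw [Finset.sum_boole, Fin.card_filter_val_lt]
    push_cast
    exact le_min ((Finset.sum_le_sum fun i (_ : i ∈ univ) => hp1 i).trans (by simp)) hp
  -- summed over `i`, the right-hand side is `t * (∑ p - #{i | i < d}) ≤ 0`
  have key : ∀ i : Fin n, p i * a i - (if (i : ℕ) < d then a i else 0) ≤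
      t * (p i - if (i : ℕ) < d then 1 else 0) := by
    intro i
    split_ifs with hi
    · nlinarith [hlt i hi, hp1 i]
    · nlinarith [hge i (not_lt.mp hi), hp0 i]
  have hsum := Finset.sum_le_sum fun i (_ : i ∈ univ) => key i
  rw [Finset.sum_sub_distrib, ← Finset.mul_sum, Finset.sum_sub_distrib] at hsum
  nlinarith [mul_nonneg ht0 (sub_nonneg.mpr hcard)]

theorem two_mul_sum_sum_mul_sub_sum_sq_le {κ : Type*} [Fintype κ] {n d : ℕ} {c : κ → ℝ}
    {lam : Fin n → ℝ} {S : κ → Fin n → ℝ} (hc : ∀ j, 0 ≤ c j) (hlam : Antitone lam)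
    (hS : ∀ j i, 0 ≤ S j i) (hrow : ∀ j, ∑ i, S j i = 1) (hcol : ∀ i, ∑ j, S j i ≤ 1)
    (hsupp : #{j | c j ≠ 0} ≤ d) :
    2 * ∑ j, ∑ i, c j * lam i * S j i - ∑ j, c j ^ 2 ≤
      ∑ i : Fin n, if (i : ℕ) < d then max (lam i) 0 ^ 2 else 0 := by
  set J : Finset κ := {j | c j ≠ 0}
  have hJ : 2 * ∑ j, ∑ i, c j * lam i * S j i - ∑ j, c j ^ 2 =
      ∑ j ∈ J, ∑ i, (2 * c j * lam i - c j ^ 2) * S j i := by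
    rw [Finset.sum_filter_of_ne fun j _ h => by contrapose! h; simp [h]]
    simp only [sub_mul, Finset.sum_sub_distrib, ← Finset.mul_sum, hrow, mul_one]
    simp only [Finset.mul_sum, mul_assoc]
  have hp1 : ∀ i, ∑ j ∈ J, S j i ≤ 1 := fun i =>
    (Finset.sum_le_sum_of_subset_of_nonneg (Finset.subset_univ J) fun j _ _ => hS j i).trans
      (hcol i)
  have hp : ∑ i, ∑ j ∈ J, S j i ≤ d := by
    rw [Finset.sum_comm]
    simpa [hrow] using hsupp
  calc 2 * ∑ j, ∑ i, c j * lam i * S j i - ∑ j, c j ^ 2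
      = ∑ j ∈ J, ∑ i, (2 * c j * lam i - c j ^ 2) * S j i := hJ
    _ ≤ ∑ j ∈ J, ∑ i, max (lam i) 0 ^ 2 * S j i := by
      gcongr with j _ i
      · exact hS j i
      · exact two_mul_mul_sub_sq_le_max_sq (hc j)
    _ = ∑ i, (∑ j ∈ J, S j i) * max (lam i) 0 ^ 2 := by
      rw [Finset.sum_comm]
      exact Finset.sum_congr rfl fun i _ => by rw [Finset.sum_mul]; simp only [mul_comm]
    _ ≤ _ := sum_mul_le_sum_ite_lt_of_antitone
        (fun i j h => pow_le_pow_left₀ (le_max_right _ _) (max_le_max_right 0 (hlam h)) 2)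
        (fun i => sq_nonneg _) (fun i => Finset.sum_nonneg fun j _ => hS j i) hp1 hp

theorem frobNorm_truncation_sub_le {n d : ℕ} {u w : Matrix (Fin n) (Fin n) ℝ}
    {lam c : Fin n → ℝ} (hu : u * uᵀ = 1) (hw : w * wᵀ = 1) (hlam : Antitone lam)
    (hc : ∀ j, 0 ≤ c j) (hsupp : #{j | c j ≠ 0} ≤ d) :
    frobNorm (uᵀ * diagonal (fun i : Fin n => if (i : ℕ) < d then max (lam i) 0 else 0) * u -
        uᵀ * diagonal lam * u) ≤
      frobNorm (wᵀ * diagonal c * w - uᵀ * diagonal lam * u) := by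
  have hQ : w * uᵀ * (w * uᵀ)ᵀ = 1 := by
    rw [transpose_mul, transpose_transpose, Matrix.mul_assoc, ← Matrix.mul_assoc uᵀ,
      mul_eq_one_comm.mp hu, Matrix.one_mul, hw]
  have hcentral := two_mul_sum_sum_mul_sub_sum_sq_le (S := fun j i => (w * uᵀ) j i ^ 2) hc hlam
    (fun _ _ => sq_nonneg _) (sum_sq_apply_eq_one_of_mul_transpose_eq_one hQ)
    (fun i => (sum_sq_apply_eq_one_of_mul_transpose_eq_one (mul_eq_one_comm.mp hQ) i).le) hsupp
  have htrunc : ∑ i : Fin n, ((if (i : ℕ) < d then max (lam i) 0 else 0) - lam i) ^ 2 =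
      ∑ i, lam i ^ 2 - ∑ i : Fin n, if (i : ℕ) < d then max (lam i) 0 ^ 2 else 0 := by
    rw [← Finset.sum_sub_distrib]
    refine Finset.sum_congr rfl fun i _ => ?_
    split_ifs
    · exact sq_max_zero_sub_self _
    · ring
  rw [← Matrix.sub_mul, ← Matrix.mul_sub, diagonal_sub,
    ← pow_le_pow_iff_left₀ (frobNorm_nonneg _) (frobNorm_nonneg _) two_ne_zero,
    sq_frobNorm_transpose_mul_diagonal_mul hu, sq_frobNorm_transpose_mul_diagonal_mul_sub hw hu]
  linarith

/-- Eckart–Young-type optimality underlying classical MDS: truncating the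
spectral decomposition of a symmetric matrix B to the top d eigenvalues,
with negative ones replaced by 0, gives the best PSD approximation of rank ≤ d
in Frobenius norm. -/
theorem stmt12 (n d : ℕ) (B : Matrix (Fin n) (Fin n) ℝ)
    (lam : Fin n → ℝ) (u : Fin n → (Fin n → ℝ))
    -- the eigenvalues are sorted in decreasing order
    (hsort : ∀ i j : Fin n, i ≤ j → lam j ≤ lam i)
    -- the eigenvectors are orthonormal
    (horth : ∀ i j : Fin n, u i ⬝ᵥ u j = if i = j then (1 : ℝ) else 0)
    -- spectral decomposition of B
    (hB : B = ∑ i : Fin n, lam i • vecMulVec (u i) (u i))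
    (C : Matrix (Fin n) (Fin n) ℝ) (hC : C.PosSemidef) (hCrank : C.rank ≤ d) :
    frobNorm ((∑ i : Fin n, (if (i : ℕ) < d then max (lam i) 0 else 0) •
        vecMulVec (u i) (u i)) - B) ≤ frobNorm (C - B) := by
  obtain ⟨w, c, hw, hc, hcard, rfl⟩ := hC.exists_eq_transpose_mul_diagonal_mul
  have hu : of u * (of u)ᵀ = 1 := by
    ext i j
    rw [mul_apply', one_apply]
    exact horth i j
  rw [hB, sum_smul_vecMulVec_self, sum_smul_vecMulVec_self]
  exact frobNorm_truncation_sub_le hu hw hsort hc (hcard.trans_le hCrank)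
end

section
/- Let ε > 2δ > 0 and suppose a geodesic of length ℓ ≥ ε in a metric space (M, d_M) from x to y is partitioned into segments of lengths ℓ₀, ℓ₁, ..., ℓ₁, ℓ₀ with ℓ₁ = ε - 2δ for interior segments and (ε - 2δ)/2 ≤ ℓ₀ ≤ ε - 2δ for the two end segments, and interior breakpoints γᵢ are each replaced by points xᵢ with d_M(xᵢ, γᵢ) < δ. Then each consecutive pair satisfies d_M(x_{i-1}, xᵢ) ≤ ε, and the total path length satisfies Σ d_M(x_{i-1}, xᵢ) ≤ (ε/(ε - 2δ)) ℓ. -/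
theorem stmt15 {M : Type*} [MetricSpace M] (k : ℕ) (hk : 2 ≤ k)
    (ε δ ℓ₀ : ℝ) (hδ : 0 < δ) (hε : 2 * δ < ε)
    (x y : M) (hxy : ε ≤ dist x y)
    (γ xs : Fin (k + 1) → M)
    (hγ0 : γ 0 = x) (hγk : γ (Fin.last k) = y)
    -- the γᵢ lie in order on a minimizing geodesic from x to y
    (hgeo : ∑ i : Fin k, dist (γ i.castSucc) (γ i.succ) = dist x y)
    -- end segments have length ℓ₀, interior segments have length ε - 2δ
    (hend1 : dist (γ 0) (γ 1) = ℓ₀)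
    (hend2 : dist (γ (Fin.last k - 1)) (γ (Fin.last k)) = ℓ₀)
    (hℓ₀l : (ε - 2 * δ) / 2 ≤ ℓ₀) (hℓ₀u : ℓ₀ ≤ ε - 2 * δ)
    (hint : ∀ i : Fin k, 1 ≤ (i : ℕ) → (i : ℕ) ≤ k - 2 →
      dist (γ i.castSucc) (γ i.succ) = ε - 2 * δ)
    -- interior breakpoints are replaced by points within δ
    (hx0 : xs 0 = x) (hxk : xs (Fin.last k) = y)
    (hclose : ∀ i : Fin (k + 1), 0 < (i : ℕ) → (i : ℕ) < k → dist (xs i) (γ i) < δ) :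
    (∀ i : Fin k, dist (xs i.castSucc) (xs i.succ) ≤ ε) ∧
    ∑ i : Fin k, dist (xs i.castSucc) (xs i.succ) ≤ (ε / (ε - 2 * δ)) * dist x y := by
  have hpos : 0 < ε - 2 * δ := by linarith
  have key : ∀ i : Fin k, dist (xs i.castSucc) (xs i.succ) ≤ ε ∧
      dist (xs i.castSucc) (xs i.succ) ≤ (ε / (ε - 2 * δ)) * dist (γ i.castSucc) (γ i.succ) := by
    intro i
    by_cases h0 : (i : ℕ) = 0
    · -- first segment
      have hc : i.castSucc = 0 := by ext; simpa using h0
      have hs : i.succ = 1 := by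
        ext
        simp [Fin.val_one, Nat.mod_eq_of_lt (by omega : 1 < k + 1), h0]
      have h1 : dist (xs (1 : Fin (k+1))) (γ 1) < δ := by
        apply hclose 1
        · simp [Nat.mod_eq_of_lt (by omega : 1 < k + 1)]
        · simp [Nat.mod_eq_of_lt (by omega : 1 < k + 1)]; omega
      have htri : dist (xs i.castSucc) (xs i.succ)
          ≤ dist (γ 0) (γ 1) + dist (xs (1 : Fin (k+1))) (γ 1) := by
        rw [hc, hs, hx0, ← hγ0]
        calc dist (γ 0) (xs 1) ≤ dist (γ 0) (γ 1) + dist (γ 1) (xs 1) := dist_triangle _ _ _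
          _ = dist (γ 0) (γ 1) + dist (xs 1) (γ 1) := by rw [dist_comm (γ 1)]
      rw [hend1] at htri
      constructor
      · linarith
      · rw [hc, hs, ← hγ0] at *
        rw [hend1]
        rw [div_mul_eq_mul_div, le_div_iff₀ hpos]
        nlinarith
    · by_cases hl : (i : ℕ) = k - 1
      · -- last segment
        have hmod : (k + k) % (k + 1) = k - 1 := by
          rw [show k + k = (k - 1) + (k + 1) by omega, Nat.add_mod_right,
            Nat.mod_eq_of_lt (by omega)]
        have hc : (Fin.last k - 1) = i.castSucc := by
          ext
          simp [Fin.sub_def, Fin.last, Fin.val_one, Nat.mod_eq_of_lt (by omega : 1 < k + 1)]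
          omega
        have hs : i.succ = Fin.last k := by
          ext; simp [Fin.last]; omega
        have h1 : dist (xs i.castSucc) (γ i.castSucc) < δ := by
          apply hclose
          · simpa using by omega
          · simpa using by omega
        have htri : dist (xs i.castSucc) (xs i.succ)
            ≤ dist (xs i.castSucc) (γ i.castSucc) + dist (γ i.castSucc) (γ (Fin.last k)) := by
          rw [hs, hxk, ← hγk]
          exact dist_triangle _ _ _
        rw [hc] at hend2
        rw [hend2] at htri
        constructor
        · linarith
        · rw [hs] at htri
          rw [hs, hend2]
          rw [div_mul_eq_mul_div, le_div_iff₀ hpos]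
          nlinarith [mul_nonneg hδ.le (by linarith : (0:ℝ) ≤ 2 * ℓ₀ - (ε - 2 * δ))]
      · -- interior segment
        have hi1 : 1 ≤ (i : ℕ) := by omega
        have hi2 : (i : ℕ) ≤ k - 2 := by
          have := i.isLt; omega
        have hlen := hint i hi1 hi2
        have h1 : dist (xs i.castSucc) (γ i.castSucc) < δ := by
          apply hclose
          · simpa using by omega
          · simpa using i.isLt
        have h2 : dist (xs i.succ) (γ i.succ) < δ := by
          apply hclose
          · simp
          · have := i.isLt; simp; omega
        have htri : dist (xs i.castSucc) (xs i.succ)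
            ≤ dist (xs i.castSucc) (γ i.castSucc) + dist (γ i.castSucc) (γ i.succ)
              + dist (γ i.succ) (xs i.succ) := dist_triangle4 _ _ _ _
        rw [dist_comm (γ i.succ)] at htri
        constructor
        · rw [hlen] at htri; linarith
        · rw [hlen, div_mul_cancel₀ _ (ne_of_gt hpos)] at *
          linarith
  refine ⟨fun i => (key i).1, ?_⟩
  calc ∑ i : Fin k, dist (xs i.castSucc) (xs i.succ)
      ≤ ∑ i : Fin k, (ε / (ε - 2 * δ)) * dist (γ i.castSucc) (γ i.succ) :=
        Finset.sum_le_sum fun i _ => (key i).2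
    _ = (ε / (ε - 2 * δ)) * ∑ i : Fin k, dist (γ i.castSucc) (γ i.succ) := by
        rw [Finset.mul_sum]
    _ = (ε / (ε - 2 * δ)) * dist x y := by rw [hgeo]
end

section
/- Let Δ be the n × n matrix of arc-length distances between n points equally spaced (at spacing L/n) along a closed rectifiable curve of total length L, so Δᵢⱼ = (L/n)·min(|i-j|, n-|i-j|). Then Δ depends only on n and L, not on the shape of the curve, and for n ≥ 4 the matrix Δ is not a matrix of Euclidean distances (not EDM-1), i.e., the doubly-centered matrix -(1/2) P [Δᵢⱼ²] P has a negative eigenvalue. -/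
/-!
For `∑ vᵢ = 0` one has `∑ vᵢ vⱼ ‖zᵢ - zⱼ‖² = -2 ‖∑ vᵢ zᵢ‖² ≤ 0` (squared Euclidean distances are of
negative type), and on such `v` the double centering by `P` leaves the quadratic form unchanged.
For the circle take `v = e₀ - e₁ + e_m - e_{m+1}` with `m = ⌊n/2⌋`, two adjacent pairs at almost
antipodal positions: the squared arc distances give it the value
`2 (2m² - 2 - (m-1)² - (n-m-1)²) (L/n)² > 0`. Hence no configuration realises `Δ`, and
`-½ P [Δᵢⱼ²] P` is negative at `v`.
-/

open Matrix

noncomputable def centeringMatrix (n : ℕ) : Matrix (Fin n) (Fin n) ℝ :=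
  1 - (n : ℝ)⁻¹ • Matrix.of (fun _ _ => (1 : ℝ))

section NegativeType

variable {ι E : Type*} [Fintype ι] [NormedAddCommGroup E] [InnerProductSpace ℝ E]

theorem dotProduct_mulVec_norm_sub_sq_eq {v : ι → ℝ} (hv : ∑ i, v i = 0) (z : ι → E) :
    v ⬝ᵥ (of (fun i j => ‖z i - z j‖ ^ 2) *ᵥ v) = -2 * ‖∑ i, v i • z i‖ ^ 2 := by
  have hcross : ‖∑ i, v i • z i‖ ^ 2 = ∑ i, ∑ j, v i * v j * inner ℝ (z i) (z j) := by
    simp only [← real_inner_self_eq_norm_sq, sum_inner, inner_sum, real_inner_smul_left,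
      real_inner_smul_right, mul_assoc]
    exact Finset.sum_congr rfl fun i _ => Finset.sum_congr rfl fun j _ => by rw [real_inner_comm]
  have hsq : ∀ w : ι → ℝ, ∑ i, ∑ j, v i * v j * w i = 0 := fun w => by
    simp only [mul_right_comm _ (v _), ← Finset.mul_sum, hv, mul_zero, Finset.sum_const_zero]
  calc v ⬝ᵥ (of (fun i j => ‖z i - z j‖ ^ 2) *ᵥ v)
      = ∑ i, ∑ j, (v i * v j * ‖z i‖ ^ 2 + v j * v i * ‖z j‖ ^ 2
          - 2 * (v i * v j * inner ℝ (z i) (z j))) := by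
        simp only [dotProduct, mulVec, of_apply, Finset.mul_sum]
        refine Finset.sum_congr rfl fun i _ => Finset.sum_congr rfl fun j _ => ?_
        rw [norm_sub_sq_real]; ring
    _ = -2 * ‖∑ i, v i • z i‖ ^ 2 := by
        rw [hcross]
        simp only [Finset.sum_sub_distrib, Finset.sum_add_distrib, ← Finset.mul_sum]
        rw [Finset.sum_comm (f := fun i j => v j * v i * ‖z j‖ ^ 2), hsq]
        ring

theorem dotProduct_mulVec_norm_sub_sq_nonpos {v : ι → ℝ} (hv : ∑ i, v i = 0) (z : ι → E) :
    v ⬝ᵥ (of (fun i j => ‖z i - z j‖ ^ 2) *ᵥ v) ≤ 0 := by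
  rw [dotProduct_mulVec_norm_sub_sq_eq hv]
  nlinarith [sq_nonneg ‖∑ i, v i • z i‖]

end NegativeType

section Centering

variable {n : ℕ} {v : Fin n → ℝ}

theorem centeringMatrix_mulVec_of_sum_eq_zero (hv : ∑ i, v i = 0) :
    centeringMatrix n *ᵥ v = v := by
  have hJ : (of fun _ _ => 1 : Matrix (Fin n) (Fin n) ℝ) *ᵥ v = 0 := by
    ext i
    simp [mulVec, dotProduct, hv]
  rw [centeringMatrix, sub_mulVec, one_mulVec, smul_mulVec, hJ, smul_zero, sub_zero]

theorem vecMul_centeringMatrix_of_sum_eq_zero (hv : ∑ i, v i = 0) :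
    v ᵥ* centeringMatrix n = v := by
  have hJ : v ᵥ* (of fun _ _ => 1 : Matrix (Fin n) (Fin n) ℝ) = 0 := by
    ext i
    simp [vecMul, dotProduct, hv]
  rw [centeringMatrix, vecMul_sub, vecMul_one, vecMul_smul, hJ, smul_zero, sub_zero]

theorem dotProduct_centeringMatrix_mul_mulVec_of_sum_eq_zero (hv : ∑ i, v i = 0)
    (A : Matrix (Fin n) (Fin n) ℝ) :
    v ⬝ᵥ ((centeringMatrix n * A * centeringMatrix n) *ᵥ v) = v ⬝ᵥ (A *ᵥ v) := by
  rw [← mulVec_mulVec, centeringMatrix_mulVec_of_sum_eq_zero hv, ← mulVec_mulVec,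
    dotProduct_mulVec, vecMul_centeringMatrix_of_sum_eq_zero hv]

end Centering

section FourPoint

variable {ι : Type*} [Fintype ι] [DecidableEq ι]

def fourPointVector (a b c d : ι) : ι → ℝ :=
  Pi.single a 1 - Pi.single b 1 + Pi.single c 1 - Pi.single d 1

theorem sum_fourPointVector (a b c d : ι) : ∑ i, fourPointVector a b c d i = 0 := by
  simp [fourPointVector, Finset.sum_add_distrib, Finset.sum_sub_distrib]

theorem fourPointVector_dotProduct_mulVec {A : Matrix ι ι ℝ} (hA : A.IsSymm)
    (hA₀ : ∀ i, A i i = 0) (a b c d : ι) :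
    fourPointVector a b c d ⬝ᵥ (A *ᵥ fourPointVector a b c d)
      = 2 * (A a c + A b d - A a b - A a d - A b c - A c d) := by
  simp [fourPointVector, mulVec_add, mulVec_sub, add_dotProduct, sub_dotProduct, hA₀,
    hA.apply b a, hA.apply c a, hA.apply d a, hA.apply c b, hA.apply d b, hA.apply d c]
  ring

end FourPoint

section Circle

def circDist (n : ℕ) (i j : Fin n) : ℕ :=
  min ((i : ℤ) - (j : ℤ)).natAbs (n - ((i : ℤ) - (j : ℤ)).natAbs)

def circDistSq (n : ℕ) : Matrix (Fin n) (Fin n) ℝ :=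
  of fun i j => (circDist n i j : ℝ) ^ 2

theorem circDist_comm {n : ℕ} (i j : Fin n) : circDist n i j = circDist n j i := by
  simp only [circDist]
  omega

theorem circDistSq_isSymm (n : ℕ) : (circDistSq n).IsSymm := by
  ext i j
  simp [circDistSq, circDist_comm i j]

theorem circDistSq_self {n : ℕ} (i : Fin n) : circDistSq n i i = 0 := by
  simp [circDistSq, circDist]

theorem circDist_mk_of_le {n i j : ℕ} (hi : i < n) (hj : j < n) (hij : i ≤ j) :
    circDist n ⟨i, hi⟩ ⟨j, hj⟩ = min (j - i) (n - (j - i)) := by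
  simp only [circDist]
  omega

theorem exists_fourPointVector_circDistSq_pos {n : ℕ} (hn : 4 ≤ n) :
    ∃ a b c d : Fin n,
      0 < fourPointVector a b c d ⬝ᵥ (circDistSq n *ᵥ fourPointVector a b c d) := by
  obtain ⟨m, hm, hnm⟩ : ∃ m, 2 ≤ m ∧ (n = 2 * m ∨ n = 2 * m + 1) := ⟨n / 2, by omega, by omega⟩
  refine ⟨⟨0, by omega⟩, ⟨1, by omega⟩, ⟨m, by omega⟩, ⟨m + 1, by omega⟩, ?_⟩
  rw [fourPointVector_dotProduct_mulVec (circDistSq_isSymm n) circDistSq_self]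
  simp (disch := omega) only [circDistSq, of_apply, circDist_mk_of_le, min_eq_left, min_eq_right,
    Nat.sub_zero, Nat.add_sub_cancel, Nat.add_sub_cancel_left]
  have hD : ((n - (m + 1) : ℕ) : ℝ) ≤ m := by exact_mod_cast (by omega : n - (m + 1) ≤ m)
  have hm' : (2 : ℝ) ≤ m := by exact_mod_cast hm
  push_cast [Nat.cast_sub (by omega : 1 ≤ m)]
  nlinarith [Nat.cast_nonneg (α := ℝ) (n - (m + 1))]

end Circle

/-- The arc-distance matrix of n points equally spaced (at spacing L/n) along a
closed curve of total length L: Δᵢⱼ = (L/n)·min(|i-j|, n-|i-j|).  (It depends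
only on n and L, not on the shape of the curve.)  For n ≥ 4 it is not a matrix
of Euclidean distances: no configuration realizes it, and equivalently the
doubly centered matrix -(1/2) P [Δᵢⱼ²] P has a negative eigenvalue. -/
theorem stmt17 (n : ℕ) (hn : 4 ≤ n) (L : ℝ) (hL : 0 < L)
    (Δ : Matrix (Fin n) (Fin n) ℝ)
    (hΔ : ∀ i j : Fin n, Δ i j =
      (L / n) * (min ((i : ℤ) - (j : ℤ)).natAbs (n - ((i : ℤ) - (j : ℤ)).natAbs) : ℕ)) :
    (¬ ∃ (p : ℕ) (z : Fin n → EuclideanSpace ℝ (Fin p)),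
        ∀ i j, Δ i j = ‖z i - z j‖) ∧
    (∃ v : Fin n → ℝ,
      v ⬝ᵥ ((-(1 / 2 : ℝ) •
        (centeringMatrix n * Matrix.of (fun i j => (Δ i j) ^ 2) * centeringMatrix n)) *ᵥ v)
        < 0) := by
  obtain ⟨a, b, c, d, hpos⟩ := exists_fourPointVector_circDistSq_pos hn
  set v := fourPointVector a b c d
  have hv : ∑ i, v i = 0 := sum_fourPointVector a b c d
  have hΔsq : of (fun i j => Δ i j ^ 2) = (L / n) ^ 2 • circDistSq n := by
    ext i j
    simp [hΔ, circDistSq, circDist, mul_pow]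
  have hform : 0 < v ⬝ᵥ (of (fun i j => Δ i j ^ 2) *ᵥ v) := by
    have hn₀ : (0 : ℝ) < n := by exact_mod_cast (by omega : 0 < n)
    rw [hΔsq, smul_mulVec, dotProduct_smul, smul_eq_mul]
    exact mul_pos (pow_pos (div_pos hL hn₀) 2) hpos
  refine ⟨?_, v, ?_⟩
  · rintro ⟨p, z, hz⟩
    have hΔz : of (fun i j => Δ i j ^ 2) = of fun i j => ‖z i - z j‖ ^ 2 := by
      ext i j
      simp [hz]
    exact (dotProduct_mulVec_norm_sub_sq_nonpos hv z).not_gt (hΔz ▸ hform)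
  · rw [smul_mulVec, dotProduct_smul, smul_eq_mul,
      dotProduct_centeringMatrix_mul_mulVec_of_sum_eq_zero hv]
    linarith
end
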